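/- Restricted to even-parity inputs (x⊕y⊕z = 0), the class-44 box P₄₄(abc|xyz) = (1/8)(1 + abc(−1)^{x+y+z+xy+xz+yz+xyz}) with a,b,c ∈ {1,−1} coincides with the perfect GHZ box. -/
import Mathlib


/-- Encode an output bit as the sign `±1` (false ↦ +1, true ↦ −1). -/
noncomputable def sgn (b : Bool) : ℝ := if b then -1 else 1

/-- Encode an input bit as the natural number 0 or 1. -/
def bit (b : Bool) : ℕ := if b then 1 else 0

/-- The class-44 box `P₄₄(abc|xyz) = (1/8)(1 + abc(−1)^{x+y+z+xy+xz+yz+xyz})`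
with outputs `a,b,c ∈ {1,−1}`. -/
noncomputable def P44 (a b c x y z : Bool) : ℝ :=
  (1 / 8) * (1 + sgn a * sgn b * sgn c *
    (-1 : ℝ) ^ (bit x + bit y + bit z + bit x * bit y + bit x * bit z + bit y * bit z +
      bit x * bit y * bit z))

/-- The perfect GHZ box on even-parity inputs: probability `1/4` on outcomes with
`abc = 1` when `xyz = 000`, and on outcomes with `abc = −1` when `xyz ≠ 000`. -/
noncomputable def PGHZ (a b c x y z : Bool) : ℝ :=
  if x = false ∧ y = false ∧ z = false then
    if sgn a * sgn b * sgn c = 1 then (1 : ℝ) / 4 else 0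
  else
    if sgn a * sgn b * sgn c = -1 then (1 : ℝ) / 4 else 0

/-- Restricted to even-parity inputs, the class-44 box coincides with the perfect GHZ box. -/
theorem class44_eq_ghz_on_even_parity (a b c x y z : Bool)
    (hxyz : Bool.xor x (Bool.xor y z) = false) :
    P44 a b c x y z = PGHZ a b c x y z := by
  revert hxyz
  cases a <;> cases b <;> cases c <;> cases x <;> cases y <;> cases z <;>
    simp [P44, PGHZ, sgn, bit] <;> norm_num
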